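/- Let (E,d) be a hemi-metric space whose symmetrized metric topology is compact, and let G be a Shapley operator (monotone and additively homogeneous) preserving Lip₁(E) and continuous for the topology of uniform convergence on compact sets. Then there exist v ∈ Lip₁(E) and λ ∈ ℝ such that G(v) = λ + v. -/

import Mathlib

open Set Filter Topology
open scoped NNReal BoundedContinuousFunction

/-!
Vanishing discount. For `t < 1` and a fixed `u₀ ∈ Lip₁(E)`, the map `u ↦ t • G u + (1 - t) • u₀`
is a `t`-contraction of `Lip₁(E)` for the sup norm, because monotonicity and additive homogeneity
make `G` sup-norm nonexpansive. Its fixed point `u` satisfies `G u - u = (1 - t) (G u - u₀)`, a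
function whose oscillation is `O(1 - t)`. Normalized by `u x₀ = 0`, these fixed points live in a
compact set of `1`-Lipschitz functions (Arzelà–Ascoli), and for a limit point `w` as `t → 1`
the continuity of `G` makes `G w - w` constant.
-/

section HemiMetric

variable {E : Type*} [PseudoMetricSpace E] {d : E → E → ℝ}

theorem abs_sub_le_dist_of_sub_le (hd : ∀ x y, dist x y = max (d x y) (d y x)) {f : E → ℝ}
    (hf : ∀ x y, f x - f y ≤ d x y) (x y : E) : |f x - f y| ≤ dist x y := by
  rw [abs_sub_le_iff, hd]
  exact ⟨(hf x y).trans (le_max_left _ _), (hf y x).trans (le_max_right _ _)⟩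

theorem lipschitzWith_one_of_sub_le (hd : ∀ x y, dist x y = max (d x y) (d y x)) {f : E → ℝ}
    (hf : ∀ x y, f x - f y ≤ d x y) : LipschitzWith 1 f :=
  LipschitzWith.of_dist_le_mul fun x y => by
    simpa [Real.dist_eq] using abs_sub_le_dist_of_sub_le hd hf x y

end HemiMetric

namespace BoundedContinuousFunction

section LipOne

variable {E : Type*} [TopologicalSpace E] {d : E → E → ℝ}

def lipOne (d : E → E → ℝ) : Set (E →ᵇ ℝ) := {f | ∀ x y, f x - f y ≤ d x y}

theorem isClosed_lipOne : IsClosed (lipOne d) := by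
  simp only [lipOne, ofPred_forall]
  exact isClosed_iInter fun x => isClosed_iInter fun y =>
    isClosed_le ((continuous_eval_const x).sub (continuous_eval_const y)) continuous_const

theorem convex_lipOne : Convex ℝ (lipOne d) := by
  intro f hf g hg a b ha hb hab x y
  calc (a • f + b • g) x - (a • f + b • g) y = a * (f x - f y) + b * (g x - g y) := by
        simp only [coe_add, coe_smul, Pi.add_apply, smul_eq_mul]; ring
    _ ≤ a * d x y + b * d x y := by gcongr <;> [exact hf x y; exact hg x y]
    _ = d x y := by rw [← add_mul, hab, one_mul]

theorem sub_const_mem_lipOne {f : E →ᵇ ℝ} (hf : f ∈ lipOne d) (c : ℝ) :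
    f - const E c ∈ lipOne d := fun x y => by
  simpa using hf x y

end LipOne

variable {E : Type*} [PseudoMetricSpace E] [CompactSpace E] {d : E → E → ℝ}

theorem nonempty_lipOne [Nonempty E] (htri : ∀ x y z, d x z ≤ d x y + d y z)
    (hd : ∀ x y, dist x y = max (d x y) (d y x)) : (lipOne d).Nonempty := by
  obtain ⟨x₀⟩ := ‹Nonempty E›
  have h : ∀ x y, d x x₀ - d y x₀ ≤ d x y := fun x y => by linarith [htri x y x₀]
  exact ⟨mkOfCompact ⟨(d · x₀), (lipschitzWith_one_of_sub_le hd h).continuous⟩, h⟩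

theorem isCompact_of_lipschitzWith_of_apply_eq_zero {S : Set (E →ᵇ ℝ)} (hS : IsClosed S)
    {K : ℝ≥0} (hK : ∀ f ∈ S, LipschitzWith K f) (x₀ : E) (h₀ : ∀ f ∈ S, f x₀ = 0) :
    IsCompact S := by
  refine arzela_ascoli₂ (Metric.closedBall 0 (K * Metric.diam (univ : Set E)))
    (isCompact_closedBall _ _) S hS (fun f x hf => ?_)
    (LipschitzWith.uniformEquicontinuous _ K fun f : S => hK f.1 f.2).equicontinuous
  rw [Metric.mem_closedBall, ← h₀ f hf]
  exact ((hK f hf).dist_le_mul x x₀).trans <| mul_le_mul_of_nonneg_left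
    (Metric.dist_le_diam_of_mem isCompact_univ.isBounded trivial trivial) K.2

theorem isCompact_lipOne_inter_apply_eq_zero (hd : ∀ x y, dist x y = max (d x y) (d y x))
    (x₀ : E) : IsCompact (lipOne d ∩ {f | f x₀ = 0}) :=
  isCompact_of_lipschitzWith_of_apply_eq_zero
    (isClosed_lipOne.inter (isClosed_eq (continuous_eval_const x₀) continuous_const))
    (fun _ hf => lipschitzWith_one_of_sub_le hd hf.1) x₀ fun _ hf => hf.2

end BoundedContinuousFunction

theorem Convex.exists_eq_smul_add_smul_of_lipschitzWith_one {F : Type*} [NormedAddCommGroup F]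
    [NormedSpace ℝ F] {K : Set F} (hK : Convex ℝ K) (hKc : IsComplete K) {T : K → K}
    (hT : LipschitzWith 1 T) {u₀ : F} (hu₀ : u₀ ∈ K) {t : ℝ} (ht₀ : 0 ≤ t) (ht₁ : t < 1) :
    ∃ u : K, (u : F) = t • (T u : F) + (1 - t) • u₀ := by
  have := hKc.completeSpace_coe
  have : Nonempty K := ⟨⟨u₀, hu₀⟩⟩
  let Φ : K → K := fun u =>
    ⟨t • (T u : F) + (1 - t) • u₀, hK (T u).2 hu₀ ht₀ (by linarith) (by ring)⟩
  have hΦ : ContractingWith t.toNNReal Φ := by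
    refine ⟨by rwa [← NNReal.coe_lt_coe, Real.coe_toNNReal t ht₀, NNReal.coe_one],
      LipschitzWith.of_dist_le_mul fun u v => ?_⟩
    rw [Real.coe_toNNReal t ht₀, Subtype.dist_eq, dist_add_right, dist_smul₀,
      Real.norm_of_nonneg ht₀]
    exact mul_le_mul_of_nonneg_left (by simpa [Subtype.dist_eq] using hT.dist_le_mul u v) ht₀
  exact ⟨hΦ.fixedPoint Φ, (congrArg Subtype.val hΦ.fixedPoint_isFixedPt).symm⟩

structure IsShapleyOperator {E : Type*} (G : (E → ℝ) → E → ℝ) : Prop where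
  mono : ∀ u w : E → ℝ, (∀ x, u x ≤ w x) → ∀ x, G u x ≤ G w x
  add_const : ∀ (c : ℝ) (u : E → ℝ) (x : E), G (fun y => c + u y) x = c + G u x

namespace IsShapleyOperator

variable {E : Type*} {G : (E → ℝ) → E → ℝ}

theorem apply_le_add (hG : IsShapleyOperator G) {u w : E → ℝ} {c : ℝ}
    (h : ∀ y, u y ≤ c + w y) (x : E) : G u x ≤ c + G w x :=
  hG.add_const c w x ▸ hG.mono _ _ h x

theorem apply_sub_const (hG : IsShapleyOperator G) (u : E → ℝ) (c : ℝ) (x : E) :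
    G (fun y => u y - c) x = G u x - c := by
  simpa [sub_eq_neg_add] using hG.add_const (-c) u x

theorem abs_sub_le_dist [TopologicalSpace E] (hG : IsShapleyOperator G) (f g : E →ᵇ ℝ)
    (x : E) : |G f x - G g x| ≤ dist f g := by
  have key : ∀ p q : E →ᵇ ℝ, G p x ≤ dist p q + G q x := fun p q =>
    hG.apply_le_add (fun y => by
      linarith [(abs_le.1 (Real.dist_eq (p y) (q y) ▸ p.dist_coe_le_dist y)).2]) x
  rw [abs_sub_le_iff]
  constructor <;> linarith [key f g, key g f, dist_comm f g]

variable [PseudoMetricSpace E] [CompactSpace E] {d : E → E → ℝ}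

open BoundedContinuousFunction

theorem exists_discounted_fixedPoint (hG : IsShapleyOperator G)
    (hd : ∀ x y, dist x y = max (d x y) (d y x))
    (hlip : ∀ u : E → ℝ, (∀ x y, u x - u y ≤ d x y) → ∀ x y, G u x - G u y ≤ d x y)
    {u₀ : E →ᵇ ℝ} (hu₀ : u₀ ∈ lipOne d) {t : ℝ} (ht₀ : 0 ≤ t) (ht₁ : t < 1) :
    ∃ u ∈ lipOne d, ∀ x, u x = t * G u x + (1 - t) * u₀ x := by
  let T : lipOne d → lipOne d := fun f =>
    ⟨mkOfCompact ⟨G f, (lipschitzWith_one_of_sub_le hd (hlip f f.2)).continuous⟩, hlip f f.2⟩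
  have hT : LipschitzWith 1 T := LipschitzWith.of_dist_le_mul fun f g => by
    rw [NNReal.coe_one, one_mul, Subtype.dist_eq, Subtype.dist_eq, dist_le dist_nonneg]
    exact fun x => (Real.dist_eq _ _).trans_le (hG.abs_sub_le_dist f g x)
  obtain ⟨u, hu⟩ := convex_lipOne.exists_eq_smul_add_smul_of_lipschitzWith_one
    isClosed_lipOne.isComplete hT hu₀ ht₀ ht₁
  exact ⟨u, u.2, fun x => by simpa [T] using congrArg (· x) hu⟩

theorem exists_normalized_approx_eigenvector (hG : IsShapleyOperator G)
    (htri : ∀ x y z, d x z ≤ d x y + d y z) (hd : ∀ x y, dist x y = max (d x y) (d y x))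
    (hlip : ∀ u : E → ℝ, (∀ x y, u x - u y ≤ d x y) → ∀ x y, G u x - G u y ≤ d x y)
    (x₀ : E) {ε : ℝ} (hε₀ : 0 < ε) (hε₁ : ε ≤ 1) :
    ∃ v ∈ lipOne d ∩ {f | f x₀ = 0},
      ∀ x y, |(G v x - v x) - (G v y - v y)| ≤ ε * (2 * dist x y) := by
  have : Nonempty E := ⟨x₀⟩
  obtain ⟨u₀, hu₀⟩ := nonempty_lipOne htri hd
  obtain ⟨u, hu, hfix⟩ := hG.exists_discounted_fixedPoint hd hlip hu₀ (t := 1 - ε)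
    (by linarith) (by linarith)
  have hdefect : ∀ x, G u x - u x = ε * (G u x - u₀ x) := fun x => by
    linear_combination -(hfix x)
  refine ⟨u - const E (u x₀), ⟨sub_const_mem_lipOne hu _, by simp⟩, fun x y => ?_⟩
  have hcoe : ⇑(u - const E (u x₀)) = fun y => u y - u x₀ := by ext; simp
  simp only [hcoe, hG.apply_sub_const, sub_sub_sub_cancel_right, hdefect]
  calc |ε * (G u x - u₀ x) - ε * (G u y - u₀ y)|
      = ε * |(G u x - G u y) - (u₀ x - u₀ y)| := by
        rw [← mul_sub, abs_mul, abs_of_pos hε₀, sub_sub_sub_comm]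
    _ ≤ ε * (2 * dist x y) := by
        gcongr
        calc |(G u x - G u y) - (u₀ x - u₀ y)| ≤ |G u x - G u y| + |u₀ x - u₀ y| := abs_sub _ _
          _ ≤ dist x y + dist x y := add_le_add (abs_sub_le_dist_of_sub_le hd (hlip u hu) x y)
              (abs_sub_le_dist_of_sub_le hd hu₀ x y)
          _ = 2 * dist x y := by ring

end IsShapleyOperator

/-- a Shapley operator (monotone, additively homogeneous) preserving
`Lip₁(E)` on a compact hemi-metric space `E`, continuous for the topology of uniform
convergence (on compact sets), admits an additive eigenpair. The hemi-metric space
`(E, d)` is encoded by a compact metric space `E` whose distance is the symmetrization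
of the hemi-metric `d`. -/
theorem stmt_13 {E : Type*} [MetricSpace E] [CompactSpace E] [Nonempty E]
    (d : E → E → ℝ)
    (htri : ∀ x y z, d x z ≤ d x y + d y z)
    (hcompat : ∀ x y, dist x y = max (d x y) (d y x))
    (G : (E → ℝ) → E → ℝ)
    (hmono : ∀ u w : E → ℝ, (∀ x, u x ≤ w x) → ∀ x, G u x ≤ G w x)
    (hhom : ∀ (c : ℝ) (u : E → ℝ) (x : E), G (fun y => c + u y) x = c + G u x)
    (hlip : ∀ u : E → ℝ, (∀ x y, u x - u y ≤ d x y) → ∀ x y, G u x - G u y ≤ d x y)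
    (hcont : ∀ (u : ℕ → E → ℝ) (w : E → ℝ),
      (∀ k, ∀ x y, u k x - u k y ≤ d x y) → (∀ x y, w x - w y ≤ d x y) →
      TendstoUniformly u w atTop → TendstoUniformly (fun k => G (u k)) (G w) atTop) :
    ∃ (v : E → ℝ) (l : ℝ), (∀ x y, v x - v y ≤ d x y) ∧ ∀ x, G v x = l + v x := by
  obtain ⟨x₀⟩ := ‹Nonempty E›
  have hG : IsShapleyOperator G := ⟨hmono, hhom⟩
  choose v hv hdefect using fun n : ℕ =>
    hG.exists_normalized_approx_eigenvector htri hcompat hlip x₀ (ε := 1 / (n + 1))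
      (by positivity) (by bound)
  obtain ⟨w, hw, φ, hφ, hvw⟩ :=
    (BoundedContinuousFunction.isCompact_lipOne_inter_apply_eq_zero hcompat x₀).tendsto_subseq hv
  have hvw' := BoundedContinuousFunction.tendsto_iff_tendstoUniformly.1 hvw
  have hGvw := hcont _ _ (fun k => (hv (φ k)).1) hw.1 hvw'
  have hconst (x : E) : (G w x - w x) - (G w x₀ - w x₀) = 0 := by
    have hε : Tendsto (fun k => 1 / ((φ k : ℝ) + 1) * (2 * dist x x₀)) atTop (𝓝 0) := by
      simpa using (tendsto_one_div_add_atTop_nhds_zero_nat.comp hφ.tendsto_atTop).mul_const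
        (2 * dist x x₀)
    refine tendsto_nhds_unique ?_ (squeeze_zero_norm (fun k => hdefect (φ k) x x₀) hε)
    exact ((hGvw.tendsto_at x).sub (hvw'.tendsto_at x)).sub
      ((hGvw.tendsto_at x₀).sub (hvw'.tendsto_at x₀))
  exact ⟨w, G w x₀ - w x₀, hw.1, fun x => by linarith [hconst x]⟩
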